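/- Let p be an odd prime, t an odd positive integer not divisible by p, and k a positive integer. Let ζ' be a primitive t·p^{k+1}-th root of unity in ℂ, and set ζ := (ζ')^{p^k}, a primitive pt-th root of unity. Then, with Ψ_{p,tp^k} defined using ζ' and Ψ_{p,t} defined using ζ, one has Ψ_{p,tp^k}(X) = Ψ_{p,t}(X^{p^k}). -/
import Mathlib


open Polynomial

/-- For an odd prime `p` and an odd positive integer `u`, given a primitive `p*u`-th root of
unity `ω` in ℂ, `Psi p u ω = ∏_{a ∈ (ℤ/puℤ)ˣ} (X − (a|p)·ω^a)`, where `(a|p)` is the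
Legendre symbol. -/
noncomputable def Psi (p u : ℕ) [Fact p.Prime] (ω : ℂ) : Polynomial ℂ :=
  ∏ a ∈ (Finset.range (p * u)).filter (fun a => Nat.Coprime a (p * u)),
    (X - C ((legendreSym p (a : ℤ) : ℂ) * ω ^ a))

lemma legendreSym_congr (p : ℕ) [Fact p.Prime] (a b : ℤ) (h : (a : ZMod p) = b) :
    legendreSym p a = legendreSym p b := by
  simp [legendreSym, h]

/-- Let p be an odd prime, t an odd positive integer not divisible by p, and k a
positive integer. Let ζ' be a primitive t·p^{k+1}-th root of unity in ℂ, and set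
ζ := (ζ')^{p^k}, a primitive pt-th root of unity. Then, with Ψ_{p,tp^k} defined using ζ' and
Ψ_{p,t} defined using ζ, one has Ψ_{p,tp^k}(X) = Ψ_{p,t}(X^{p^k}). -/
theorem stmt_9 (p : ℕ) [Fact p.Prime] (hpodd : Odd p)
    (t : ℕ) (ht : Odd t) (ht0 : 0 < t) (hpt : ¬ p ∣ t)
    (k : ℕ) (hk : 0 < k)
    (ζ' : ℂ) (hζ' : IsPrimitiveRoot ζ' (t * p ^ (k + 1))) :
    Psi p (t * p ^ k) ζ' = (Psi p t (ζ' ^ (p ^ k))).comp (X ^ (p ^ k)) := by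
  have hp : p.Prime := Fact.out
  have hppos : 0 < p := hp.pos
  have hpkpos : 0 < p ^ k := pow_pos hppos k
  have hptpos : 0 < p * t := Nat.mul_pos hppos ht0
  have hμ : IsPrimitiveRoot (ζ' ^ (p * t)) (p ^ k) :=
    hζ'.pow (Nat.mul_pos ht0 (pow_pos hppos (k + 1))) (by ring)
  -- Legendre symbol values are ±1 on coprime inputs, and invariant under shift by p*t*m
  have hleg_pm : ∀ b : ℕ, Nat.Coprime b (p * t) →
      (legendreSym p (b : ℤ) : ℂ) = 1 ∨ (legendreSym p (b : ℤ) : ℂ) = -1 := by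
    intro b hb
    have hb' : ((b : ℤ) : ZMod p) ≠ 0 := by
      rw [Int.cast_natCast, Ne, ZMod.natCast_eq_zero_iff]
      intro hd
      have hd2 : p ∣ Nat.gcd b (p * t) := Nat.dvd_gcd hd ⟨t, rfl⟩
      rw [hb] at hd2
      exact absurd (Nat.le_of_dvd one_pos hd2) (by have := hp.two_le; omega)
    rcases legendreSym.eq_one_or_neg_one p hb' with h | h
    · left; exact_mod_cast congrArg (Int.cast : ℤ → ℂ) h
    · right; exact_mod_cast congrArg (Int.cast : ℤ → ℂ) h
  have hlegpow : ∀ b : ℕ, Nat.Coprime b (p * t) →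
      ((legendreSym p (b : ℤ) : ℂ)) ^ (p ^ k) = (legendreSym p (b : ℤ) : ℂ) := by
    intro b hb
    have hodd : Odd (p ^ k) := hpodd.pow
    rcases hleg_pm b hb with h | h <;> rw [h]
    · exact one_pow _
    · exact hodd.neg_one_pow
  -- rewrite the RHS
  rw [Psi, Psi, Polynomial.prod_comp]
  have hrhs : ∀ b ∈ (Finset.range (p * t)).filter (fun a => Nat.Coprime a (p * t)),
      (X - C ((legendreSym p (b : ℤ) : ℂ) * (ζ' ^ p ^ k) ^ b)).comp (X ^ p ^ k)
      = ∏ j ∈ Finset.range (p ^ k),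
          (X - C ((ζ' ^ (p * t)) ^ j * ((legendreSym p (b : ℤ) : ℂ) * ζ' ^ b))) := by
    intro b hb
    have hbcop : Nat.Coprime b (p * t) := (Finset.mem_filter.mp hb).2
    have he : ((legendreSym p (b : ℤ) : ℂ) * ζ' ^ b) ^ (p ^ k)
        = (legendreSym p (b : ℤ) : ℂ) * (ζ' ^ p ^ k) ^ b := by
      rw [mul_pow, hlegpow b hbcop, ← pow_mul, ← pow_mul, mul_comm b (p ^ k)]
    rw [sub_comp, X_comp, C_comp, X_pow_sub_C_eq_prod hμ hpkpos he]
  rw [Finset.prod_congr rfl hrhs, ← Finset.prod_product']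
  -- now both sides are single products; establish a bijection
  refine (Finset.prod_nbij' (fun a => (a % (p * t), a / (p * t)))
    (fun x => x.1 + (p * t) * x.2) ?_ ?_ ?_ ?_ ?_)
  · intro a ha
    rw [Finset.mem_filter, Finset.mem_range] at ha
    obtain ⟨halt, hacop⟩ := ha
    have hacop' : Nat.Coprime a ((p * t) * p ^ k) := by
      rw [show p * t * p ^ k = p * (t * p ^ k) by ring]; exact hacop
    rw [Nat.coprime_mul_iff_right] at hacop'
    rw [Finset.mem_product, Finset.mem_filter, Finset.mem_range, Finset.mem_range]
    refine ⟨⟨Nat.mod_lt _ hptpos, ?_⟩, ?_⟩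
    · have : Nat.Coprime (a % (p * t) + (p * t) * (a / (p * t))) (p * t) := by
        rw [Nat.mod_add_div]; exact hacop'.1
      rwa [Nat.coprime_add_mul_left_left] at this
    · rw [Nat.div_lt_iff_lt_mul hptpos]
      calc a < p * (t * p ^ k) := halt
        _ = p ^ k * (p * t) := by ring
  · intro x hx
    rw [Finset.mem_product, Finset.mem_filter, Finset.mem_range, Finset.mem_range] at hx
    obtain ⟨⟨hb, hbcop⟩, hm⟩ := hx
    rw [Finset.mem_filter, Finset.mem_range]
    constructor
    · calc x.1 + p * t * x.2 < p * t + p * t * x.2 := by omega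
        _ = p * t * (x.2 + 1) := by ring
        _ ≤ p * t * p ^ k := by
            exact Nat.mul_le_mul_left _ (by omega)
        _ = p * (t * p ^ k) := by ring
    · have h1 : Nat.Coprime (x.1 + p * t * x.2) (p * t) := by
        rw [Nat.coprime_add_mul_left_left]; exact hbcop
      have h2 : Nat.Coprime (x.1 + p * t * x.2) (p ^ k) := by
        exact Nat.Coprime.pow_right _ (Nat.Coprime.coprime_dvd_right (Dvd.intro t rfl) h1)
      have : Nat.Coprime (x.1 + p * t * x.2) ((p * t) * p ^ k) :=
        Nat.Coprime.mul_right h1 h2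
      rwa [show p * t * p ^ k = p * (t * p ^ k) by ring] at this
  · intro a _
    exact Nat.mod_add_div a (p * t)
  · intro x hx
    rw [Finset.mem_product, Finset.mem_filter, Finset.mem_range, Finset.mem_range] at hx
    obtain ⟨⟨hb, _⟩, _⟩ := hx
    ext
    · simp [Nat.add_mul_mod_self_left, Nat.mod_eq_of_lt hb]
    · simp [Nat.add_mul_div_left _ _ hptpos, Nat.div_eq_of_lt hb]
  · intro a ha
    rw [Finset.mem_filter, Finset.mem_range] at ha
    have hdecomp : a % (p * t) + (p * t) * (a / (p * t)) = a := Nat.mod_add_div a (p * t)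
    have hleg : legendreSym p ((a % (p * t) : ℕ) : ℤ) = legendreSym p (a : ℤ) := by
      apply legendreSym_congr
      conv_rhs => rw [← hdecomp]
      push_cast
      simp [ZMod.natCast_self]
    rw [hleg]
    congr 2
    rw [mul_comm ((ζ' ^ (p * t)) ^ (a / (p * t))) _, mul_assoc, ← pow_mul, ← pow_add,
      Nat.mod_add_div]
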